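/- arXiv:2501.05021 — 9 statements merged into one kernel-verified Lean document; each statement's English description precedes it below -/
import Mathlib

section
/- Let w ≥ 4 be an even integer and λ > 0 a real number, and let a(ℓ) = λ·(1 − w/2)^ℓ. Define the hard-decision value q̂(ℓ) = −(w/2)·a(ℓ−1) for ℓ ≥ 1. Then q̂(ℓ) = λ·(1 − w/2)^ℓ·(w/2)/(w/2 − 1), and q̂(ℓ) > 0 if and only if ℓ is even; hence the hard decision of the min-sum decoder oscillates at every iteration between estimating the all-zero error pattern and the all-one (weight-w) error pattern on the stabilizer. -/
/-- With `a(ℓ) = λ·(1 - w/2)^ℓ` (`λ > 0`, `w ≥ 4` even) and hard-decision value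
`q̂(ℓ) = -(w/2)·a(ℓ-1)` for `ℓ ≥ 1`, one has
`q̂(ℓ) = λ·(1 - w/2)^ℓ·(w/2)/(w/2 - 1)` and `q̂(ℓ) > 0 ↔ ℓ` even, so the hard decision
oscillates between the all-zero and the all-one error pattern on the stabilizer. -/
theorem stmt_3 (w : ℕ) (hw : 4 ≤ w) (hweven : Even w) (lam : ℝ) (hlam : 0 < lam)
    (a : ℕ → ℝ) (ha : ∀ ℓ : ℕ, a ℓ = lam * (1 - (w : ℝ) / 2) ^ ℓ)
    (q : ℕ → ℝ) (hq : ∀ ℓ : ℕ, 1 ≤ ℓ → q ℓ = -((w : ℝ) / 2) * a (ℓ - 1)) :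
    ∀ ℓ : ℕ, 1 ≤ ℓ →
      q ℓ = lam * (1 - (w : ℝ) / 2) ^ ℓ * ((w : ℝ) / 2) / ((w : ℝ) / 2 - 1) ∧
      (0 < q ℓ ↔ Even ℓ) := by
  intro ℓ hℓ
  obtain ⟨k, rfl⟩ := Nat.exists_eq_add_of_le hℓ
  have hw2 : (4 : ℝ) ≤ (w : ℝ) := by exact_mod_cast hw
  have hc : (1 : ℝ) - (w : ℝ) / 2 < 0 := by linarith
  have hne : (w : ℝ) / 2 - 1 ≠ 0 := by intro h; linarith
  have hqv : q (1 + k) = -((w : ℝ) / 2) * (lam * (1 - (w : ℝ) / 2) ^ k) := by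
    rw [hq (1 + k) hℓ]
    congr 1
    rw [ha]
    norm_num
  constructor
  · rw [hqv, show 1 + k = k + 1 from by ring, pow_succ, eq_div_iff hne]
    ring
  · rw [hqv]
    have hpos : 0 < (w : ℝ) / 2 * lam := by positivity
    rcases Nat.even_or_odd k with hk | hk
    · have h1 : 0 < (1 - (w : ℝ) / 2) ^ k := hk.pow_pos (by linarith)
      constructor
      · intro h
        exfalso
        nlinarith
      · intro h
        exact absurd hk (Nat.even_add_one.mp (by rwa [Nat.add_comm] at h))
    · have h1 : (1 - (w : ℝ) / 2) ^ k < 0 := hk.pow_neg hc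
      constructor
      · intro _
        rw [Nat.add_comm]
        exact Nat.even_add_one.mpr (Nat.not_even_iff_odd.mpr hk)
      · intro _
        nlinarith
end

section
/- Let w ≥ 4 be an even integer and λ a real number. The unique sequence a : ℕ → ℝ with a(0) = λ satisfying the non-homogeneous min-sum recursion a(ℓ) = −(w/2 − 1)·a(ℓ−1) + λ for all ℓ ≥ 1 is given in closed form by a(ℓ) = (2λ/w)·(1 + (w/2 − 1)·(1 − w/2)^ℓ). Moreover, if w ≥ 6 and λ > 0, then for all ℓ ≥ 1 the sign of a(ℓ) equals (−1)^ℓ, so the messages still oscillate at every iteration. -/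
/-!
The recursion is affine with ratio `r = 1 - w/2` and fixed point `λ / (1 - r) = 2λ/w`, so
`a ℓ - 2λ/w = r^ℓ (λ - 2λ/w)`, which rearranges to `a ℓ = (2λ/w)(1 - r^(ℓ+1))`. For `w > 4`
we have `r < -1`, and then `(-1)^ℓ (1 - r^(ℓ+1)) = (-1)^ℓ + |r|^(ℓ+1) > 0`.
-/

theorem eq_of_affine_recurrence {K : Type*} [Field K] {r c : K} (hr : r ≠ 1) {a : ℕ → K}
    (hrec : ∀ n, a (n + 1) = r * a n + c) (n : ℕ) :
    a n = c / (1 - r) + (a 0 - c / (1 - r)) * r ^ n := by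
  have hr' : 1 - r ≠ 0 := sub_ne_zero.mpr hr.symm
  induction n with
  | zero => ring
  | succ n ih =>
    rw [hrec, ih]
    field_simp
    ring

theorem neg_one_pow_mul_one_sub_pow_succ_pos {r : ℝ} (hr : r < -1) (n : ℕ) :
    0 < (-1) ^ n * (1 - r ^ (n + 1)) := by
  have hpow : 1 < (-r) ^ (n + 1) := one_lt_pow₀ (by linarith) n.succ_ne_zero
  have hsign : (-1 : ℝ) ^ n * r ^ (n + 1) = -(-r) ^ (n + 1) := by
    rw [neg_pow r]
    ring
  have hle : -1 ≤ (-1 : ℝ) ^ n := by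
    rcases neg_one_pow_eq_or ℝ n with h | h <;> norm_num [h]
  rw [mul_sub, mul_one, hsign]
  linarith

theorem Real.sign_eq_neg_one_pow_of_pos_mul {x : ℝ} {n : ℕ} (h : 0 < (-1) ^ n * x) :
    Real.sign x = (-1) ^ n := by
  rcases neg_one_pow_eq_or ℝ n with hn | hn <;> rw [hn] at h ⊢
  · exact Real.sign_of_pos (by linarith)
  · exact Real.sign_of_neg (by linarith)

theorem stmt_4_general (w : ℕ) (hw : 4 ≤ w) (lam : ℝ)
    (a : ℕ → ℝ) (h0 : a 0 = lam)
    (hrec : ∀ ℓ : ℕ, 1 ≤ ℓ → a ℓ = -((w : ℝ) / 2 - 1) * a (ℓ - 1) + lam) :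
    (∀ ℓ : ℕ, a ℓ = (2 * lam / (w : ℝ)) * (1 + ((w : ℝ) / 2 - 1) * (1 - (w : ℝ) / 2) ^ ℓ)) ∧
    (6 ≤ w → 0 < lam → ∀ ℓ : ℕ, 1 ≤ ℓ → Real.sign (a ℓ) = (-1 : ℝ) ^ ℓ) := by
  have hw4 : (4 : ℝ) ≤ w := by exact_mod_cast hw
  have hw0 : (w : ℝ) ≠ 0 := (by linarith : (0 : ℝ) < w).ne'
  have hrec' : ∀ n, a (n + 1) = (1 - (w : ℝ) / 2) * a n + lam := fun n => by
    rw [hrec (n + 1) n.succ_pos, Nat.add_sub_cancel]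
    ring
  have closed : ∀ ℓ, a ℓ = (2 * lam / w) * (1 - (1 - (w : ℝ) / 2) ^ (ℓ + 1)) := fun ℓ => by
    rw [eq_of_affine_recurrence (by linarith) hrec' ℓ, h0, sub_sub_cancel]
    field_simp
    ring
  refine ⟨fun ℓ => by rw [closed]; field_simp; ring, fun hw6 hlam ℓ _ => ?_⟩
  have hr : 1 - (w : ℝ) / 2 < -1 := by
    have : (6 : ℝ) ≤ w := by exact_mod_cast hw6
    linarith
  apply Real.sign_eq_neg_one_pow_of_pos_mul
  rw [closed, mul_left_comm]
  exact mul_pos (by positivity) (neg_one_pow_mul_one_sub_pow_succ_pos hr ℓ)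

/-- The unique solution of the non-homogeneous min-sum recursion
`a(ℓ) = -(w/2 - 1)·a(ℓ-1) + λ`, `a(0) = λ`, has closed form
`a(ℓ) = (2λ/w)·(1 + (w/2 - 1)·(1 - w/2)^ℓ)`; and if `w ≥ 6` and `λ > 0` then the sign of
`a(ℓ)` equals `(-1)^ℓ` for all `ℓ ≥ 1`, so the messages still oscillate at every iteration. -/
theorem stmt_4 (w : ℕ) (hw : 4 ≤ w) (hweven : Even w) (lam : ℝ)
    (a : ℕ → ℝ) (h0 : a 0 = lam)
    (hrec : ∀ ℓ : ℕ, 1 ≤ ℓ → a ℓ = -((w : ℝ) / 2 - 1) * a (ℓ - 1) + lam) :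
    (∀ ℓ : ℕ, a ℓ = (2 * lam / (w : ℝ)) * (1 + ((w : ℝ) / 2 - 1) * (1 - (w : ℝ) / 2) ^ ℓ)) ∧
    (6 ≤ w → 0 < lam → ∀ ℓ : ℕ, 1 ≤ ℓ → Real.sign (a ℓ) = (-1 : ℝ) ^ ℓ) :=
  stmt_4_general w hw lam a h0 hrec
end

section
/- Let f, g ≥ 1 be integers and m = f + g. The vector v = (1, 1, −1, −1) satisfies M·v = (1 − m)·v; that is, 1 − m is an eigenvalue of M with eigenvector (1, 1, −1, −1). Consequently M^ℓ·v = (1 − m)^ℓ·v for all ℓ, so along this mode every message alternates in sign at each iteration and its magnitude equals (m − 1)^ℓ, which tends to infinity when m ≥ 3. -/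
/-- The transition matrix of the linearized min-sum message recursions within a
`(2m,0)` symmetric stabilizer, with `f` errors in one block and `g` in the other. -/
def Mmat (K : Type*) [Field K] (f g : K) : Matrix (Fin 4) (Fin 4) K :=
  !![0, -f, g - 1, 0;
     0, -(f - 1), g, 0;
     f - 1, 0, 0, -g;
     f, 0, 0, -(g - 1)]

/-- `v = (1,1,-1,-1)` is an eigenvector of `M` for the eigenvalue `1 - m`;
hence `M^ℓ·v = (1-m)^ℓ·v`, along this mode every message alternates in sign at each
iteration and has magnitude `(m-1)^ℓ`, which tends to infinity when `m ≥ 3`. -/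
theorem stmt_7 (f g : ℤ) (hf : 1 ≤ f) (hg : 1 ≤ g) :
    let M := Mmat ℚ (f : ℚ) (g : ℚ)
    let v : Fin 4 → ℚ := ![1, 1, -1, -1]
    M.mulVec v = (1 - ((f : ℚ) + (g : ℚ))) • v ∧
    (∀ ℓ : ℕ, (M ^ ℓ).mulVec v = ((1 - ((f : ℚ) + (g : ℚ))) ^ ℓ) • v) ∧
    (∀ ℓ : ℕ, ∀ i : Fin 4, ((M ^ ℓ).mulVec v) i * ((M ^ (ℓ + 1)).mulVec v) i < 0) ∧
    (∀ ℓ : ℕ, ∀ i : Fin 4, |((M ^ ℓ).mulVec v) i| = (((f : ℚ) + (g : ℚ)) - 1) ^ ℓ) ∧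
    (3 ≤ f + g →
      Filter.Tendsto (fun ℓ : ℕ => |((M ^ ℓ).mulVec v) 0|) Filter.atTop Filter.atTop) := by
  intro M v
  have hfQ : (1 : ℚ) ≤ (f : ℚ) := by exact_mod_cast hf
  have hgQ : (1 : ℚ) ≤ (g : ℚ) := by exact_mod_cast hg
  set m : ℚ := (f : ℚ) + (g : ℚ) with hm
  have hm2 : (2 : ℚ) ≤ m := by linarith
  have heig : M.mulVec v = (1 - m) • v := by
    funext i
    fin_cases i <;>
      simp [M, v, Mmat, Matrix.mulVec, dotProduct, Fin.sum_univ_four] <;> ring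
  have hpow : ∀ ℓ : ℕ, (M ^ ℓ).mulVec v = ((1 - m) ^ ℓ) • v := by
    intro ℓ
    induction ℓ with
    | zero => simp
    | succ n ih =>
        rw [pow_succ', ← Matrix.mulVec_mulVec, ih, Matrix.mulVec_smul, heig,
          smul_smul, pow_succ']
        rw [mul_comm]
  have hvsq : ∀ i : Fin 4, v i * v i = 1 := by intro i; fin_cases i <;> norm_num [v]
  have hneg : 1 - m < 0 := by linarith
  refine ⟨heig, hpow, ?_, ?_, ?_⟩
  · intro ℓ i
    rw [hpow, hpow]
    have : ((1 - m) ^ ℓ • v) i * ((1 - m) ^ (ℓ + 1) • v) i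
        = (1 - m) ^ (2 * ℓ + 1) * (v i * v i) := by
      simp [Pi.smul_apply, smul_eq_mul]; ring
    rw [this, hvsq, mul_one]
    exact Odd.pow_neg ⟨ℓ, by ring⟩ hneg
  · intro ℓ i
    rw [hpow]
    have hvabs : |v i| = 1 := by fin_cases i <;> simp [v]
    rw [Pi.smul_apply, smul_eq_mul, abs_mul, hvabs, mul_one, abs_pow,
      abs_of_neg hneg]
    ring_nf
  · intro h3
    have h3Q : (3 : ℚ) ≤ m := by
      have : ((3 : ℤ) : ℚ) ≤ ((f + g : ℤ) : ℚ) := by exact_mod_cast h3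
      push_cast at this; linarith
    have habs : ∀ ℓ : ℕ, |((M ^ ℓ).mulVec v) 0| = (m - 1) ^ ℓ := by
      intro ℓ
      rw [hpow]
      simp [Pi.smul_apply, smul_eq_mul, abs_mul, abs_pow, abs_of_neg hneg, v]
    simp only [habs]
    exact tendsto_pow_atTop_atTop_of_one_lt (by linarith)
end

section
/- Let f, g ≥ 1 be integers and m = f + g. The vector u = (−f·g, g², f·g, −f²) is nonzero and satisfies M·u = u; that is, 1 is an eigenvalue of M with eigenvector (−f·g, g², f·g, −f²). -/
/-- `u = (-f·g, g², f·g, -f²)` is a nonzero fixed vector of `M`: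
`1` is an eigenvalue of `M` with eigenvector `u`. -/
theorem stmt_8 (f g : ℤ) (hf : 1 ≤ f) (hg : 1 ≤ g) :
    let M := Mmat ℚ (f : ℚ) (g : ℚ)
    let u : Fin 4 → ℚ := ![-((f : ℚ) * (g : ℚ)), (g : ℚ) ^ 2, (f : ℚ) * (g : ℚ), -((f : ℚ) ^ 2)]
    u ≠ 0 ∧ M.mulVec u = u := by
  intro M u
  have hf' : (0:ℚ) < f := by exact_mod_cast lt_of_lt_of_le zero_lt_one hf
  have hg' : (0:ℚ) < g := by exact_mod_cast lt_of_lt_of_le zero_lt_one hg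
  constructor
  · intro h
    have := congrFun h 1
    simp [u] at this
    exact absurd this (by positivity)
  · funext i
    fin_cases i <;>
      simp [M, u, Mmat, Matrix.mulVec, dotProduct, Fin.sum_univ_four] <;> ring
end

section
/- Let f, g ≥ 1 be integers and m = f + g, and regard M as a complex matrix. Then det(M − i·√(m−1)·I) = 0 and det(M + i·√(m−1)·I) = 0; that is, i·√(m−1) and −i·√(m−1) are (purely imaginary) eigenvalues of M over ℂ. -/
theorem det_Mmat_sub_smul_one {K : Type*} [Field K] (f g t : K) :
    (Mmat K f g - t • 1).det = (t - 1) * (t + (f + g - 1)) * (t ^ 2 + (f + g - 1)) := by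
  rw [Matrix.det_succ_row_zero]
  simp [Fin.sum_univ_succ, Matrix.det_fin_three, Mmat, Matrix.one_apply, Fin.succAbove]
  ring

theorem det_Mmat_sub_smul_one_eq_zero {K : Type*} [Field K] {f g t : K}
    (ht : t ^ 2 = -(f + g - 1)) : (Mmat K f g - t • 1).det = 0 := by
  rw [det_Mmat_sub_smul_one, ht, neg_add_cancel, mul_zero]

/-- Regarded as a complex matrix, `M` has the purely imaginary eigenvalues
`i·√(m-1)` and `-i·√(m-1)`, where `m = f + g`: the determinants of `M ∓ i·√(m-1)·I` vanish. -/
theorem stmt_9 (f g : ℤ) (hf : 1 ≤ f) (hg : 1 ≤ g) :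
    let M := Mmat ℂ (f : ℂ) (g : ℂ)
    let s : ℂ := (Real.sqrt ((f : ℝ) + (g : ℝ) - 1) : ℂ)
    (M - (Complex.I * s) • (1 : Matrix (Fin 4) (Fin 4) ℂ)).det = 0 ∧
    (M + (Complex.I * s) • (1 : Matrix (Fin 4) (Fin 4) ℂ)).det = 0 := by
  intro M s
  have hm : (0 : ℝ) ≤ f + g - 1 := by exact_mod_cast (by omega : (0 : ℤ) ≤ f + g - 1)
  have hs : s ^ 2 = f + g - 1 := by
    simp only [s, ← Complex.ofReal_pow, Real.sq_sqrt hm]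
    push_cast
    ring
  have hIs : (Complex.I * s) ^ 2 = -(f + g - 1) := by
    rw [mul_pow, Complex.I_sq, hs, neg_one_mul]
  refine ⟨det_Mmat_sub_smul_one_eq_zero hIs, ?_⟩
  have h := det_Mmat_sub_smul_one_eq_zero (f := (f : ℂ)) (g := g) (t := -(Complex.I * s))
    (by rwa [neg_sq])
  rwa [neg_smul, sub_neg_eq_add] at h
end

section
/- Let f, g ≥ 1 be integers and m = f + g. The four complex numbers 1, 1 − m, i·√(m−1), −i·√(m−1) are pairwise distinct, and the set of complex eigenvalues of M (the roots of its characteristic polynomial over ℂ) is exactly {1, 1 − m, i·√(m−1), −i·√(m−1)}. -/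
lemma my_det_fin_four {R : Type*} [CommRing R] (A : Matrix (Fin 4) (Fin 4) R) :
    A.det = A 0 0*A 1 1*A 2 2*A 3 3 - A 0 0*A 1 1*A 2 3*A 3 2 - A 0 0*A 1 2*A 2 1*A 3 3 + A 0 0*A 1 2*A 2 3*A 3 1 + A 0 0*A 1 3*A 2 1*A 3 2 - A 0 0*A 1 3*A 2 2*A 3 1 - A 0 1*A 1 0*A 2 2*A 3 3 + A 0 1*A 1 0*A 2 3*A 3 2 + A 0 1*A 1 2*A 2 0*A 3 3 - A 0 1*A 1 2*A 2 3*A 3 0 - A 0 1*A 1 3*A 2 0*A 3 2 + A 0 1*A 1 3*A 2 2*A 3 0 + A 0 2*A 1 0*A 2 1*A 3 3 - A 0 2*A 1 0*A 2 3*A 3 1 - A 0 2*A 1 1*A 2 0*A 3 3 + A 0 2*A 1 1*A 2 3*A 3 0 + A 0 2*A 1 3*A 2 0*A 3 1 - A 0 2*A 1 3*A 2 1*A 3 0 - A 0 3*A 1 0*A 2 1*A 3 2 + A 0 3*A 1 0*A 2 2*A 3 1 + A 0 3*A 1 1*A 2 0*A 3 2 - A 0 3*A 1 1*A 2 2*A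 3 0 - A 0 3*A 1 2*A 2 0*A 3 1 + A 0 3*A 1 2*A 2 1*A 3 0 := by
  rw [Matrix.det_succ_row_zero, Fin.sum_univ_four]
  simp (config := { decide := true }) [Matrix.det_fin_three, Matrix.submatrix_apply,
    Fin.succAbove, Fin.lt_def, show (Fin.succ 2 : Fin 4) = 3 from rfl,
    show (Fin.castSucc 2 : Fin 4) = 2 from rfl]
  ring

open Polynomial in
lemma Mmat_charpoly {K : Type*} [Field K] (f g : K) :
    (Mmat K f g).charpoly =
      (X - C 1) * (X - C (1 - (f + g))) * (X ^ 2 + C (f + g - 1)) := by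
  rw [Matrix.charpoly, my_det_fin_four]
  simp [Matrix.charmatrix_apply, Mmat, Matrix.one_apply, Matrix.vecHead, Matrix.vecTail]
  ring

/-- The four complex numbers `1, 1-m, i·√(m-1), -i·√(m-1)` are pairwise
distinct, and the set of complex roots of the characteristic polynomial of `M` is exactly
`{1, 1-m, i·√(m-1), -i·√(m-1)}`, where `m = f + g`. -/
theorem stmt_10 (f g : ℤ) (hf : 1 ≤ f) (hg : 1 ≤ g) :
    let m : ℂ := (f : ℂ) + (g : ℂ)
    let s : ℂ := Complex.I * (Real.sqrt ((f : ℝ) + (g : ℝ) - 1) : ℂ)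
    [(1 : ℂ), 1 - m, s, -s].Pairwise (· ≠ ·) ∧
    {z : ℂ | (Mmat ℂ (f : ℂ) (g : ℂ)).charpoly.IsRoot z} = {1, 1 - m, s, -s} := by
  intro m s
  have hr : (0:ℝ) < (f : ℝ) + (g : ℝ) - 1 := by
    have : (1:ℝ) ≤ (f:ℝ) := by exact_mod_cast hf
    have : (1:ℝ) ≤ (g:ℝ) := by exact_mod_cast hg
    linarith [show (1:ℝ) ≤ (f:ℝ) from by exact_mod_cast hf]
  have ht : 0 < Real.sqrt ((f : ℝ) + (g : ℝ) - 1) := Real.sqrt_pos.2 hr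
  have hsim : s.im = Real.sqrt ((f : ℝ) + (g : ℝ) - 1) := by
    simp [s]
  have hs2 : s ^ 2 = -(m - 1) := by
    have : ((Real.sqrt ((f : ℝ) + (g : ℝ) - 1) : ℝ) : ℂ) ^ 2
        = (((f : ℝ) + (g : ℝ) - 1 : ℝ) : ℂ) := by
      rw [← Complex.ofReal_pow, Real.sq_sqrt hr.le]
    simp only [s, mul_pow, Complex.I_sq, this, m]
    push_cast
    ring
  have hmim : m.im = 0 := by simp [m]
  have hm2 : (2:ℝ) ≤ m.re := by
    have h1 : (1:ℝ) ≤ (f:ℝ) := by exact_mod_cast hf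
    have h2 : (1:ℝ) ≤ (g:ℝ) := by exact_mod_cast hg
    simp [m]; linarith
  have h1m : (1:ℂ) ≠ 1 - m := by
    intro h
    have : m = 0 := by linear_combination h
    rw [this] at hm2; simp at hm2; linarith
  have h1s : (1:ℂ) ≠ s := by
    intro h
    have := congrArg Complex.im h
    simp [hsim] at this; linarith
  have h1ns : (1:ℂ) ≠ -s := by
    intro h
    have := congrArg Complex.im h
    simp [hsim] at this; linarith
  have h2s : 1 - m ≠ s := by
    intro h
    have := congrArg Complex.im h
    simp [hsim, hmim] at this; linarith
  have h2ns : 1 - m ≠ -s := by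
    intro h
    have := congrArg Complex.im h
    simp [hsim, hmim] at this; linarith
  have hsns : s ≠ -s := by
    intro h
    have := congrArg Complex.im h
    simp [hsim] at this; linarith
  constructor
  · simp [List.pairwise_cons, h1m, h1s, h1ns, h2s, h2ns, hsns]
  · ext z
    simp only [Set.mem_setOf_eq, Polynomial.IsRoot, Mmat_charpoly,
      Polynomial.eval_mul, Polynomial.eval_add, Polynomial.eval_sub,
      Polynomial.eval_pow, Polynomial.eval_X, Polynomial.eval_C,
      Set.mem_insert_iff, Set.mem_singleton_iff]
    have key : z ^ 2 + ((f:ℂ) + (g:ℂ) - 1) = (z - s) * (z + s) := by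
      have : z ^ 2 + ((f:ℂ) + (g:ℂ) - 1) = z ^ 2 - s ^ 2 := by
        rw [hs2]; ring
      rw [this]; ring
    rw [key, mul_eq_zero, mul_eq_zero, mul_eq_zero]
    constructor
    · rintro ((h | h) | (h | h))
      · exact Or.inl (by linear_combination h)
      · exact Or.inr (Or.inl (by linear_combination h))
      · exact Or.inr (Or.inr (Or.inl (by linear_combination h)))
      · exact Or.inr (Or.inr (Or.inr (by linear_combination h)))
    · rintro (h | h | h | h)
      · exact Or.inl (Or.inl (by rw [h]; ring))
      · exact Or.inl (Or.inr (by rw [h]; ring))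
      · exact Or.inr (Or.inl (by rw [h]; ring))
      · exact Or.inr (Or.inr (by rw [h]; ring))
end

section
/- Let f, g ≥ 1 be integers and m = f + g, and regard M as a complex 4×4 matrix. Then M is diagonalizable over ℂ: there exist an invertible complex 4×4 matrix P and the diagonal matrix D with diagonal entries 1, 1 − m, i·√(m−1), −i·√(m−1) such that M = P·D·P⁻¹. Consequently, for every v₀ ∈ ℂ⁴ there exist vectors x₁, x₂, x₃, x₄ ∈ ℂ⁴ with M·x₁ = x₁, M·x₂ = i·√(m−1)·x₂, M·x₃ = −i·√(m−1)·x₃, M·x₄ = (1 − m)·x₄, v₀ = x₁ + x₂ + x₃ + x₄, and M^ℓ·v₀ = x₁ + (i·√(m−1))^ℓ·x₂ + (−i·√(m−1))^ℓ·x₃ + (1 − m)^ℓ·x₄ for all ℓ ≥ 0. -/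
namespace Matrix

variable {n R : Type*} [Fintype n] [DecidableEq n] [CommRing R] {M P : Matrix n n R} {d : n → R}

theorem mulVec_col_of_mul_eq_mul_diagonal (h : M * P = P * diagonal d) (j : n) :
    M *ᵥ P.col j = d j • P.col j := by
  ext i
  simp only [mulVec, dotProduct, col_apply, Pi.smul_apply, smul_eq_mul]
  rw [mul_comm, ← mul_diagonal, ← h, mul_apply]

theorem pow_mulVec_of_mulVec_eq_smul {x : n → R} {μ : R} (h : M *ᵥ x = μ • x) (ℓ : ℕ) :
    (M ^ ℓ) *ᵥ x = μ ^ ℓ • x := by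
  induction ℓ with
  | zero => simp
  | succ ℓ ih => rw [pow_succ', ← mulVec_mulVec, ih, mulVec_smul, h, smul_smul, pow_succ]

theorem eq_sum_smul_col (hP : IsUnit P) (v : n → R) :
    v = ∑ j, (P⁻¹ *ᵥ v) j • P.col j := by
  have : P *ᵥ (P⁻¹ *ᵥ v) = v := by
    rw [mulVec_mulVec, mul_nonsing_inv _ ((isUnit_iff_isUnit_det P).mp hP), one_mulVec]
  conv_lhs => rw [← this]
  ext i
  simp [mulVec, dotProduct, Finset.sum_apply, mul_comm]

theorem pow_mulVec_eq_sum_of_mul_eq_mul_diagonal (h : M * P = P * diagonal d) (hP : IsUnit P)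
    (v : n → R) (ℓ : ℕ) :
    (M ^ ℓ) *ᵥ v = ∑ j, d j ^ ℓ • ((P⁻¹ *ᵥ v) j • P.col j) := by
  conv_lhs => rw [eq_sum_smul_col hP v]
  simp only [mulVec_sum, mulVec_smul, pow_mulVec_of_mulVec_eq_smul
    (mulVec_col_of_mul_eq_mul_diagonal h _), smul_comm (d _ ^ ℓ)]

theorem eq_mul_diagonal_mul_inv (h : M * P = P * diagonal d) (hP : IsUnit P) :
    M = P * diagonal d * P⁻¹ := by
  rw [← h, mul_nonsing_inv_cancel_right P M ((isUnit_iff_isUnit_det P).mp hP)]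

end Matrix

section Eigenvectors

variable {K : Type*} [Field K]

open Matrix

def mmatEigenvectors (f g s : K) : Matrix (Fin 4) (Fin 4) K :=
  !![-f * g, 1, s + g - 1, -s + g - 1;
     g * g, 1, g, g;
     f * g, -1, s + f - 1, -s + f - 1;
     -f * f, -1, f, f]

theorem det_mmatEigenvectors (f g s : K) :
    (mmatEigenvectors f g s).det = -2 * (f + g) ^ 3 * s := by
  simp [mmatEigenvectors, det_succ_row_zero, Fin.sum_univ_succ, Fin.succAbove]
  ring

theorem Mmat_mul_mmatEigenvectors {f g s : K} (hs : s ^ 2 = 1 - (f + g)) :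
    Mmat K f g * mmatEigenvectors f g s =
      mmatEigenvectors f g s * diagonal ![1, 1 - (f + g), s, -s] := by
  ext i j
  fin_cases i <;> fin_cases j <;>
    simp [Mmat, mmatEigenvectors, mul_apply, Fin.sum_univ_four] <;>
    first | ring1 | linear_combination -hs

theorem isUnit_mmatEigenvectors [NeZero (2 : K)] {f g s : K} (hm : f + g ≠ 0) (hs : s ≠ 0) :
    IsUnit (mmatEigenvectors f g s) := by
  rw [isUnit_iff_isUnit_det, det_mmatEigenvectors, isUnit_iff_ne_zero]
  exact mul_ne_zero (mul_ne_zero (neg_ne_zero.mpr two_ne_zero) (pow_ne_zero _ hm)) hs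

end Eigenvectors

/-- Over `ℂ`, `M` is diagonalizable with eigenvalues
`1, 1-m, i·√(m-1), -i·√(m-1)` (`m = f + g`); consequently every initial vector `v₀`
decomposes into eigencomponents `x₁ + x₂ + x₃ + x₄` and
`M^ℓ·v₀ = x₁ + (i√(m-1))^ℓ·x₂ + (-i√(m-1))^ℓ·x₃ + (1-m)^ℓ·x₄` for all `ℓ`. -/
theorem stmt_11 (f g : ℤ) (hf : 1 ≤ f) (hg : 1 ≤ g) :
    let m : ℂ := (f : ℂ) + (g : ℂ)
    let s : ℂ := Complex.I * (Real.sqrt ((f : ℝ) + (g : ℝ) - 1) : ℂ)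
    let M := Mmat ℂ (f : ℂ) (g : ℂ)
    let D : Matrix (Fin 4) (Fin 4) ℂ := Matrix.diagonal ![1, 1 - m, s, -s]
    (∃ P : Matrix (Fin 4) (Fin 4) ℂ, IsUnit P ∧ M = P * D * P⁻¹) ∧
    ∀ v₀ : Fin 4 → ℂ, ∃ x₁ x₂ x₃ x₄ : Fin 4 → ℂ,
      M.mulVec x₁ = x₁ ∧
      M.mulVec x₂ = s • x₂ ∧
      M.mulVec x₃ = (-s) • x₃ ∧
      M.mulVec x₄ = (1 - m) • x₄ ∧
      v₀ = x₁ + x₂ + x₃ + x₄ ∧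
      ∀ ℓ : ℕ, (M ^ ℓ).mulVec v₀ =
        x₁ + s ^ ℓ • x₂ + (-s) ^ ℓ • x₃ + (1 - m) ^ ℓ • x₄ := by
  intro m s M D
  have hm : (f : ℂ) + g ≠ 0 := by exact_mod_cast (by omega : f + g ≠ 0)
  have hpos : (0 : ℝ) < (f : ℝ) + (g : ℝ) - 1 := by
    have : (1 : ℝ) ≤ f := by exact_mod_cast hf
    have : (1 : ℝ) ≤ g := by exact_mod_cast hg
    linarith
  have hs : s ≠ 0 :=
    mul_ne_zero Complex.I_ne_zero (Complex.ofReal_ne_zero.mpr (Real.sqrt_pos.mpr hpos).ne')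
  have hs_sq : s ^ 2 = 1 - m := by
    simp only [s, m]
    rw [mul_pow, Complex.I_sq, ← Complex.ofReal_pow, Real.sq_sqrt hpos.le]
    push_cast
    ring
  set P := mmatEigenvectors (f : ℂ) g s
  have hMP : M * P = P * D := Mmat_mul_mmatEigenvectors hs_sq
  have hP : IsUnit P := isUnit_mmatEigenvectors hm hs
  refine ⟨⟨P, hP, Matrix.eq_mul_diagonal_mul_inv hMP hP⟩, fun v₀ => ?_⟩
  set c := P⁻¹.mulVec v₀ with hc
  have hcol := Matrix.mulVec_col_of_mul_eq_mul_diagonal hMP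
  refine ⟨c 0 • P.col 0, c 2 • P.col 2, c 3 • P.col 3, c 1 • P.col 1,
    ?_, ?_, ?_, ?_, ?_, fun ℓ => ?_⟩
  iterate 4 simp [Matrix.mulVec_smul, hcol, smul_comm (c _)]
  · conv_lhs => rw [Matrix.eq_sum_smul_col hP v₀]
    rw [Fin.sum_univ_four]
    abel
  · rw [Matrix.pow_mulVec_eq_sum_of_mul_eq_mul_diagonal hMP hP, Fin.sum_univ_four, ← hc]
    simp only [Matrix.cons_val, one_pow, one_smul]
    abel
end

section
/- Let m ≥ 2 be an integer and let (a_y, a_g) evolve under the MS-PI case-1 dynamics. If at some iteration ℓ₀ it holds that a_y(ℓ₀) > 0 and a_g(ℓ₀) < 0, then for all ℓ ≥ ℓ₀ one has a_y(ℓ) > 0 and a_g(ℓ) < 0; i.e., the sign pattern (a_y > 0, a_g < 0) is invariant under the MS-PI dynamics. Consequently, the hard-decision values q̂_{Y1}(ℓ) = −m·a_g(ℓ−1) and q̂_{G0}(ℓ) = −m·a_y(ℓ−1) satisfy q̂_{Y1}(ℓ) > 0 and q̂_{G0}(ℓ) < 0 for all ℓ > ℓ₀. -/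
/-- The sign function used in min-sum decoding: `-1` for negative inputs, `+1` otherwise. -/
noncomputable def sgn (u : ℝ) : ℝ := if u < 0 then -1 else 1

/-- For the MS-PI case-1 dynamics
`a_g(ℓ+1) = -(m-1)·a_y(ℓ)`, `a_y(ℓ+1) = ν + χ·a_y(ℓ)` with `ν = -(m-1)·a_g(ℓ)` and
`χ = 1` iff `sgn ν ≠ sgn(a_y(ℓ))`, the sign pattern `(a_y > 0, a_g < 0)` is invariant:
if it holds at `ℓ₀` it holds for all `ℓ ≥ ℓ₀`; consequently the hard-decision values
`q̂_{Y1}(ℓ) = -m·a_g(ℓ-1)` and `q̂_{G0}(ℓ) = -m·a_y(ℓ-1)` satisfy `q̂_{Y1}(ℓ) > 0` and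
`q̂_{G0}(ℓ) < 0` for all `ℓ > ℓ₀`. -/
theorem stmt_14 (m : ℕ) (hm : 2 ≤ m) (ay ag : ℕ → ℝ)
    (hgrec : ∀ ℓ : ℕ, ag (ℓ + 1) = -((m : ℝ) - 1) * ay ℓ)
    (hyrec : ∀ ℓ : ℕ, ay (ℓ + 1) =
      (-((m : ℝ) - 1) * ag ℓ) +
        (if sgn (-((m : ℝ) - 1) * ag ℓ) ≠ sgn (ay ℓ) then (1 : ℝ) else 0) * ay ℓ)
    (ℓ₀ : ℕ) (hy0 : 0 < ay ℓ₀) (hg0 : ag ℓ₀ < 0) :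
    (∀ ℓ : ℕ, ℓ₀ ≤ ℓ → 0 < ay ℓ ∧ ag ℓ < 0) ∧
    (∀ ℓ : ℕ, ℓ₀ < ℓ → 0 < -(m : ℝ) * ag (ℓ - 1) ∧ -(m : ℝ) * ay (ℓ - 1) < 0) := by
  have hm1 : (0:ℝ) < (m:ℝ) - 1 := by
    have : (2:ℝ) ≤ (m:ℝ) := by exact_mod_cast hm
    linarith
  have key : ∀ ℓ : ℕ, ℓ₀ ≤ ℓ → 0 < ay ℓ ∧ ag ℓ < 0 := by
    intro ℓ hℓ
    induction ℓ with
    | zero =>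
      have : ℓ₀ = 0 := Nat.le_zero.mp hℓ
      subst this; exact ⟨hy0, hg0⟩
    | succ n ih =>
      rcases Nat.lt_or_ge ℓ₀ (n+1) with h | h
      · have ⟨hy, hg⟩ := ih (Nat.lt_succ_iff.mp h)
        have hν : 0 < -((m : ℝ) - 1) * ag n := by nlinarith
        have hsgn : sgn (-((m : ℝ) - 1) * ag n) = sgn (ay n) := by
          unfold sgn
          rw [if_neg (by linarith), if_neg (by linarith)]
        constructor
        · rw [hyrec n, if_neg (not_not.mpr hsgn)]
          simpa using hν
        · rw [hgrec n]; nlinarith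
      · have : ℓ₀ = n + 1 := le_antisymm hℓ h
        subst this; exact ⟨hy0, hg0⟩
  refine ⟨key, fun ℓ hℓ => ?_⟩
  obtain ⟨n, rfl⟩ : ∃ n, ℓ = n + 1 := ⟨ℓ - 1, (Nat.succ_pred_eq_of_pos (Nat.zero_lt_of_lt hℓ)).symm⟩
  have ⟨hy, hg⟩ := key n (Nat.lt_succ_iff.mp hℓ)
  have hmpos : (0:ℝ) < (m:ℝ) := by linarith
  constructor <;> simp only [Nat.add_sub_cancel] <;> nlinarith
end

section
/- Let w ≥ 6 be an even integer and λ > 0 a real number, and let a(ℓ) = λ·(1 − w/2)^ℓ be the min-sum message sequence. Then the hard-decision sequence q̂(ℓ) = −(w/2)·a(ℓ−1) satisfies |q̂(ℓ)| = λ·(w/2)·(w/2 − 1)^{ℓ−1} and q̂(ℓ)·q̂(ℓ+1) < 0 for all ℓ ≥ 1; in particular q̂(ℓ) never stabilizes in sign, so the min-sum decoder never converges to a fixed error estimate on the stabilizer. -/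
/-- For `w ≥ 6` even and `λ > 0`, with min-sum messages
`a(ℓ) = λ·(1 - w/2)^ℓ` and hard-decision values `q̂(ℓ) = -(w/2)·a(ℓ-1)`, one has
`|q̂(ℓ)| = λ·(w/2)·(w/2 - 1)^(ℓ-1)` and `q̂(ℓ)·q̂(ℓ+1) < 0` for all `ℓ ≥ 1`: the hard
decision never stabilizes in sign, so min-sum never converges to a fixed error estimate. -/
theorem stmt_17 (w : ℕ) (hw : 6 ≤ w) (hweven : Even w) (lam : ℝ) (hlam : 0 < lam)
    (a : ℕ → ℝ) (ha : ∀ ℓ : ℕ, a ℓ = lam * (1 - (w : ℝ) / 2) ^ ℓ)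
    (q : ℕ → ℝ) (hq : ∀ ℓ : ℕ, 1 ≤ ℓ → q ℓ = -((w : ℝ) / 2) * a (ℓ - 1)) :
    ∀ ℓ : ℕ, 1 ≤ ℓ →
      |q ℓ| = lam * ((w : ℝ) / 2) * ((w : ℝ) / 2 - 1) ^ (ℓ - 1) ∧
      q ℓ * q (ℓ + 1) < 0 := by
  set c : ℝ := (w : ℝ) / 2 with hc
  have hw6 : (6 : ℝ) ≤ (w : ℝ) := by exact_mod_cast hw
  have hc3 : (3 : ℝ) ≤ c := by rw [hc]; linarith
  have hc0 : 0 < c := by linarith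
  have hc1 : 0 < c - 1 := by linarith
  have key : ∀ ℓ : ℕ, 1 ≤ ℓ → q ℓ = -c * (lam * (-(c - 1)) ^ (ℓ - 1)) := by
    intro ℓ hℓ
    rw [hq ℓ hℓ, ha]
    have : 1 - c = -(c - 1) := by ring
    rw [this]
  intro ℓ hℓ
  constructor
  · rw [key ℓ hℓ]
    rw [abs_mul, abs_mul, abs_pow, abs_neg, abs_neg]
    rw [abs_of_pos hc0, abs_of_pos hlam, abs_of_pos hc1]
    ring
  · rw [key ℓ hℓ, key (ℓ + 1) (by omega)]
    have h1 : ℓ + 1 - 1 = (ℓ - 1) + 1 := by omega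
    rw [h1]
    have : -c * (lam * (-(c - 1)) ^ (ℓ - 1)) * (-c * (lam * (-(c - 1)) ^ (ℓ - 1 + 1)))
        = -(c * c * lam * lam * (c - 1) * ((c - 1) ^ (ℓ - 1)) ^ 2) := by
      rw [pow_succ, neg_pow (c - 1) (ℓ - 1)]
      rcases neg_one_pow_eq_or ℝ (ℓ - 1) with h | h <;> rw [h] <;> ring
    rw [this, neg_lt_zero]
    have hp : 0 < (c - 1) ^ (ℓ - 1) := pow_pos hc1 _
    positivity
end
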